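/- arXiv:1009.3089 — 7 statements merged into one kernel-verified Lean document; each statement's English description precedes it below -/
import Mathlib

section
/- Let a, b, c be unit vectors in Euclidean 3-space such that b ≠ a, b ≠ -a, c ≠ a, c ≠ -a. Then |det(a,b,c)| = sin(∠_a(b,c)) · sin(dS(a,b)) · sin(dS(a,c)), where det(a,b,c) is the determinant of the 3×3 matrix with rows a, b, c. -/
open RealInnerProductSpace

/-- The determinant of the 3×3 matrix whose rows are `a`, `b`, `c`. -/
noncomputable def det3 (a b c : EuclideanSpace ℝ (Fin 3)) : ℝ :=
  Matrix.det !![a 0, a 1, a 2; b 0, b 1, b 2; c 0, c 1, c 2]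

/-- The spherical distance between two unit vectors. -/
noncomputable def sphDist (x y : EuclideanSpace ℝ (Fin 3)) : ℝ :=
  Real.arccos ⟪x, y⟫

/-- The tangential projection of `b` at `a`. -/
noncomputable def tproj (a b : EuclideanSpace ℝ (Fin 3)) : EuclideanSpace ℝ (Fin 3) :=
  b - ⟪b, a⟫ • a

/-- The spherical angle at `a` between `b` and `c`. -/
noncomputable def sphAngle (a b c : EuclideanSpace ℝ (Fin 3)) : ℝ :=
  InnerProductGeometry.angle (tproj a b) (tproj a c)

/-!
The tangential projections `u = P_a b`, `v = P_a c` satisfy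
`⟪u, v⟫ = ⟪b, c⟫ - ⟪b, a⟫⟪c, a⟫`; hence `‖u‖ = sin dS(a, b)`, and the Gram determinant
`‖u‖²‖v‖² - ⟪u, v⟫²` of `u, v` equals the Gram determinant of `a, b, c`, which is
`det(a, b, c)²`. Taking square roots gives `sin ∠(u, v) ‖u‖ ‖v‖ = |det(a, b, c)|`.
-/

open InnerProductGeometry
open scoped Matrix

lemma inner_tproj_tproj {a : EuclideanSpace ℝ (Fin 3)} (ha : ‖a‖ = 1)
    (b c : EuclideanSpace ℝ (Fin 3)) :
    ⟪tproj a b, tproj a c⟫ = ⟪b, c⟫ - ⟪b, a⟫ * ⟪c, a⟫ := by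
  simp only [tproj, inner_sub_left, inner_sub_right, real_inner_smul_left, real_inner_smul_right,
    real_inner_self_eq_norm_sq, ha, real_inner_comm a]
  ring

lemma sin_sphDist_eq_norm_tproj {a b : EuclideanSpace ℝ (Fin 3)} (ha : ‖a‖ = 1) (hb : ‖b‖ = 1) :
    Real.sin (sphDist a b) = ‖tproj a b‖ := by
  rw [sphDist, Real.sin_arccos, norm_eq_sqrt_real_inner, inner_tproj_tproj ha,
    real_inner_self_eq_norm_sq, hb, real_inner_comm]
  ring_nf

lemma det3_sq_eq_det_gram (a b c : EuclideanSpace ℝ (Fin 3)) :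
    det3 a b c ^ 2 = (Matrix.gram ℝ ![a, b, c]).det := by
  set M : Matrix (Fin 3) (Fin 3) ℝ := !![a 0, a 1, a 2; b 0, b 1, b 2; c 0, c 1, c 2]
  have hgram : Matrix.gram ℝ ![a, b, c] = M * Mᵀ := by
    ext i j
    rw [Matrix.gram_apply, PiLp.inner_apply, Matrix.mul_apply]
    fin_cases i <;> fin_cases j <;> simp [M, Fin.sum_univ_three, mul_comm, sq]
  rw [hgram, Matrix.det_mul, Matrix.det_transpose, det3, sq]

lemma det3_sq_eq_gram_tproj {a : EuclideanSpace ℝ (Fin 3)} (ha : ‖a‖ = 1)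
    (b c : EuclideanSpace ℝ (Fin 3)) :
    det3 a b c ^ 2 = ⟪tproj a b, tproj a b⟫ * ⟪tproj a c, tproj a c⟫
      - ⟪tproj a b, tproj a c⟫ * ⟪tproj a b, tproj a c⟫ := by
  have haa : ⟪a, a⟫ = 1 := by rw [real_inner_self_eq_norm_sq, ha, one_pow]
  rw [det3_sq_eq_det_gram, Matrix.det_fin_three]
  simp only [Matrix.gram_apply, Matrix.cons_val_zero, Matrix.cons_val_one, Matrix.cons_val_two,
    Matrix.head_cons, Matrix.tail_cons, inner_tproj_tproj ha, haa, real_inner_comm a,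
    real_inner_comm b c]
  ring

theorem abs_det_eq_sin_angle_mul_sin_dist_mul_sin_dist_general
    (a b c : EuclideanSpace ℝ (Fin 3))
    (ha : ‖a‖ = 1) (hb : ‖b‖ = 1) (hc : ‖c‖ = 1) :
    |det3 a b c| =
      Real.sin (sphAngle a b c) * Real.sin (sphDist a b) * Real.sin (sphDist a c) := by
  rw [sin_sphDist_eq_norm_tproj ha hb, sin_sphDist_eq_norm_tproj ha hc, mul_assoc, sphAngle,
    sin_angle_mul_norm_mul_norm, ← det3_sq_eq_gram_tproj ha, Real.sqrt_sq_eq_abs]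

theorem abs_det_eq_sin_angle_mul_sin_dist_mul_sin_dist
    (a b c : EuclideanSpace ℝ (Fin 3))
    (ha : ‖a‖ = 1) (hb : ‖b‖ = 1) (hc : ‖c‖ = 1)
    (hba : b ≠ a) (hba' : b ≠ -a) (hca : c ≠ a) (hca' : c ≠ -a) :
    |det3 a b c| =
      Real.sin (sphAngle a b c) * Real.sin (sphDist a b) * Real.sin (sphDist a c) :=
  abs_det_eq_sin_angle_mul_sin_dist_mul_sin_dist_general a b c ha hb hc
end

section
/- Let o, u, v be unit vectors in Euclidean 3-space with u ≠ o, u ≠ -o, v ≠ o, v ≠ -o. Then sin(∠_o(u,v)) · sin(dS(o,v)) ≤ sin(dS(u,v)). -/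
open RealInnerProductSpace

/-! With `a = ⟪u, o⟫`, `b = ⟪v, o⟫`, `c = ⟪u, v⟫` and `p`, `q` the tangential projections of `u`, `v`
at `o`, one has `‖p‖² = 1 - a²`, `‖q‖² = 1 - b²`, `⟪p, q⟫ = c - ab`, and
`(sin ∠(p, q) · ‖p‖ · ‖q‖)² = ‖p‖²‖q‖² - ⟪p, q⟫² = 1 - a² - b² - c² + 2abc`,
the Gram determinant of `o, u, v`. It falls short of `‖p‖² (1 - c²)` by exactly `(ac - b)²`;
dividing by `‖p‖` and using `‖q‖ = sin dS(o, v)`, `√(1 - c²) = sin dS(u, v)` gives the inequality. -/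

section TangentialProjection

variable {E : Type*} [NormedAddCommGroup E] [InnerProductSpace ℝ E] {a x y : E}

lemma inner_sub_inner_smul_self (ha : ‖a‖ = 1) :
    ⟪x - ⟪x, a⟫ • a, y - ⟪y, a⟫ • a⟫ = ⟪x, y⟫ - ⟪x, a⟫ * ⟪y, a⟫ := by
  have haa : ⟪a, a⟫ = (1 : ℝ) := by rw [real_inner_self_eq_norm_sq, ha, one_pow]
  simp only [inner_sub_left, inner_sub_right, real_inner_smul_left, real_inner_smul_right, haa,
    real_inner_comm a]
  ring

lemma norm_sub_inner_smul_self_sq (ha : ‖a‖ = 1) (hx : ‖x‖ = 1) :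
    ‖x - ⟪x, a⟫ • a‖ ^ 2 = 1 - ⟪x, a⟫ ^ 2 := by
  rw [← real_inner_self_eq_norm_sq, inner_sub_inner_smul_self ha, real_inner_self_eq_norm_sq, hx]
  ring

lemma norm_sub_inner_smul_self (ha : ‖a‖ = 1) (hx : ‖x‖ = 1) :
    ‖x - ⟪x, a⟫ • a‖ = √(1 - ⟪x, a⟫ ^ 2) := by
  rw [← norm_sub_inner_smul_self_sq ha hx, Real.sqrt_sq (norm_nonneg _)]

lemma sub_inner_smul_self_ne_zero (ha : ‖a‖ = 1) (hx : ‖x‖ = 1) (hxa : x ≠ a) (hxa' : x ≠ -a) :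
    x - ⟪x, a⟫ • a ≠ 0 := by
  intro h
  have hsq : ⟪x, a⟫ ^ 2 = 1 := by
    have := norm_sub_inner_smul_self_sq ha hx
    rw [h, norm_zero] at this
    linarith
  rcases sq_eq_one_iff.mp hsq with h1 | h1
  · exact hxa ((inner_eq_one_iff_of_norm_eq_one hx ha).mp h1)
  · exact hxa' ((inner_eq_neg_one_iff_of_norm_eq_one hx ha).mp h1)

lemma gram_sub_inner_smul_self_le (ha : ‖a‖ = 1) (hx : ‖x‖ = 1) (hy : ‖y‖ = 1) :
    ‖x - ⟪x, a⟫ • a‖ ^ 2 * ‖y - ⟪y, a⟫ • a‖ ^ 2 - ⟪x - ⟪x, a⟫ • a, y - ⟪y, a⟫ • a⟫ ^ 2 ≤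
      ‖x - ⟪x, a⟫ • a‖ ^ 2 * (1 - ⟪x, y⟫ ^ 2) := by
  rw [norm_sub_inner_smul_self_sq ha hx, norm_sub_inner_smul_self_sq ha hy,
    inner_sub_inner_smul_self ha]
  nlinarith [sq_nonneg (⟪x, y⟫ * ⟪x, a⟫ - ⟪y, a⟫)]

lemma sin_angle_mul_norm_sub_inner_smul_self_le (ha : ‖a‖ = 1) (hx : ‖x‖ = 1) (hy : ‖y‖ = 1)
    (hxa : x - ⟪x, a⟫ • a ≠ 0) :
    Real.sin (InnerProductGeometry.angle (x - ⟪x, a⟫ • a) (y - ⟪y, a⟫ • a)) *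
      ‖y - ⟪y, a⟫ • a‖ ≤ √(1 - ⟪x, y⟫ ^ 2) := by
  set p := x - ⟪x, a⟫ • a
  set q := y - ⟪y, a⟫ • a
  refine le_of_mul_le_mul_right ?_ (norm_pos_iff.mpr hxa)
  calc Real.sin (InnerProductGeometry.angle p q) * ‖q‖ * ‖p‖
      = √(⟪p, p⟫ * ⟪q, q⟫ - ⟪p, q⟫ * ⟪p, q⟫) := by
        rw [← InnerProductGeometry.sin_angle_mul_norm_mul_norm]; ring
    _ ≤ √(‖p‖ ^ 2 * (1 - ⟪x, y⟫ ^ 2)) := by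
        simp only [real_inner_self_eq_norm_sq, ← sq]
        exact Real.sqrt_le_sqrt (gram_sub_inner_smul_self_le ha hx hy)
    _ = √(1 - ⟪x, y⟫ ^ 2) * ‖p‖ := by
        rw [Real.sqrt_mul (sq_nonneg _), Real.sqrt_sq (norm_nonneg _), mul_comm]

end TangentialProjection

theorem sin_angle_mul_sin_dist_le_general (o u v : EuclideanSpace ℝ (Fin 3))
    (ho : ‖o‖ = 1) (hu : ‖u‖ = 1) (hv : ‖v‖ = 1)
    (huo : u ≠ o) (huo' : u ≠ -o) :
    Real.sin (sphAngle o u v) * Real.sin (sphDist o v) ≤ Real.sin (sphDist u v) := by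
  have key := sin_angle_mul_norm_sub_inner_smul_self_le ho hu hv
    (sub_inner_smul_self_ne_zero ho hu huo huo')
  rw [norm_sub_inner_smul_self ho hv] at key
  rwa [sphAngle, tproj, tproj, sphDist, sphDist, Real.sin_arccos, Real.sin_arccos,
    real_inner_comm v o]

theorem sin_angle_mul_sin_dist_le (o u v : EuclideanSpace ℝ (Fin 3))
    (ho : ‖o‖ = 1) (hu : ‖u‖ = 1) (hv : ‖v‖ = 1)
    (huo : u ≠ o) (huo' : u ≠ -o) (hvo : v ≠ o) (hvo' : v ≠ -o) :
    Real.sin (sphAngle o u v) * Real.sin (sphDist o v) ≤ Real.sin (sphDist u v) :=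
  sin_angle_mul_sin_dist_le_general o u v ho hu hv huo huo'
end

section
/- In the Burillo setup, fix r > 0, an open set U ⊆ A of diameter at most r with chosen point a_U ∈ U, and x ∈ p⁻¹(a_U). If y ∈ W_{U,x} and z ∈ p⁻¹(U) satisfies d(z,y) ≤ r, then z ∈ W_{U,x}. Consequently, W_{U,x} is an open subset of X. -/
/-!
Lifting `z` to the fibre over `a_U` moves it by `d(p z, a_U) ≤ diam U ≤ r`, so the lift `z'` is
within `3r` of the witness `y'` of `y`, whence `δ(z', y') ≤ 3rL`; the ultrametric inequality then
gives `δ(z', x) ≤ 3rL`. Openness follows because `W_{U,x}` is therefore `p⁻¹(U)` intersected with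
the open `r`-neighbourhood of `W_{U,x}`.
-/

/-- In the Burillo setup, the set `W_{U,x}` (formed with parameter `r`): all points `y`
mapping into `U` such that some `y'` in the fiber over `a_U` satisfies `d(y,y') ≤ r`
and `δ_{a_U}(y',x) ≤ 3rL`. -/
def burilloW {X A : Type*} [MetricSpace X] (p : X → A) (δ : A → X → X → ℝ)
    (L r : ℝ) (U : Set A) (aU : A) (x : X) : Set X :=
  {y | p y ∈ U ∧ ∃ y', p y' = aU ∧ dist y y' ≤ r ∧ δ aU y' x ≤ 3 * r * L}

open Metric

theorem isOpen_of_forall_dist_le_mem {X : Type*} [PseudoMetricSpace X] {S V : Set X} {r : ℝ}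
    (hr : 0 < r) (hV : IsOpen V) (hSV : S ⊆ V)
    (hS : ∀ y ∈ S, ∀ z ∈ V, dist z y ≤ r → z ∈ S) : IsOpen S := by
  have hS_eq : S = V ∩ ⋃ y ∈ S, ball y r := by
    ext z
    refine ⟨fun hz => ⟨hSV hz, Set.mem_biUnion hz (mem_ball_self hr)⟩, ?_⟩
    rintro ⟨hzV, hz⟩
    obtain ⟨y, hy, hzy⟩ := Set.mem_iUnion₂.mp hz
    exact hS y hy z hzV (mem_ball.mp hzy).le
  rw [hS_eq]
  exact hV.inter (isOpen_biUnion fun y _ => isOpen_ball)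

theorem mem_burilloW_of_dist_le {X A : Type*} [MetricSpace X] [PseudoMetricSpace A]
    {p : X → A} (hlift : ∀ (a : A) (x : X), ∃ y, p y = a ∧ dist x y = dist (p x) a)
    {L : ℝ} (hL : 0 ≤ L) {δ : A → X → X → ℝ}
    (hδultra : ∀ a x y z, p x = a → p y = a → p z = a →
      δ a x z ≤ max (δ a x y) (δ a y z))
    (hδle : ∀ a x y, p x = a → p y = a → δ a x y ≤ L * dist x y)
    {r : ℝ} {U : Set A} (hUdiam : ∀ a ∈ U, ∀ a' ∈ U, dist a a' ≤ r)
    {aU : A} (haU : aU ∈ U) {x : X} (hx : p x = aU)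
    {y z : X} (hy : y ∈ burilloW p δ L r U aU x) (hzU : p z ∈ U) (hzy : dist z y ≤ r) :
    z ∈ burilloW p δ L r U aU x := by
  obtain ⟨-, y', hy'a, hyy', hy'x⟩ := hy
  obtain ⟨z', hz'a, hzz'⟩ := hlift aU z
  have hzz'_le : dist z z' ≤ r := hzz'.le.trans (hUdiam _ hzU _ haU)
  have hz'y' : dist z' y' ≤ 3 * r :=
    calc dist z' y' ≤ dist z' z + dist z y + dist y y' := dist_triangle4 z' z y y'
      _ ≤ r + r + r := by gcongr; rwa [dist_comm]
      _ = 3 * r := by ring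
  have hδz'y' : δ aU z' y' ≤ 3 * r * L :=
    calc δ aU z' y' ≤ L * dist z' y' := hδle aU z' y' hz'a hy'a
      _ ≤ L * (3 * r) := by gcongr
      _ = 3 * r * L := by ring
  refine ⟨hzU, z', hz'a, hzz'_le, ?_⟩
  exact (hδultra aU z' y' x hz'a hy'a hx).trans (max_le hδz'y' hy'x)

theorem burilloW_claim1_general {X A : Type*} [MetricSpace X] [MetricSpace A]
    (p : X → A) (hp : Continuous p)
    (hlift : ∀ (a : A) (x : X), ∃ y, p y = a ∧ dist x y = dist (p x) a)
    (L : ℝ) (hL : 1 ≤ L) (δ : A → X → X → ℝ)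
    (hδultra : ∀ a x y z, p x = a → p y = a → p z = a →
      δ a x z ≤ max (δ a x y) (δ a y z))
    (hδdist : ∀ a x y, p x = a → p y = a →
      dist x y ≤ δ a x y ∧ δ a x y ≤ L * dist x y)
    (r : ℝ) (hr : 0 < r) (U : Set A) (hUopen : IsOpen U)
    (hUdiam : ∀ a ∈ U, ∀ a' ∈ U, dist a a' ≤ r)
    (aU : A) (haU : aU ∈ U) (x : X) (hx : p x = aU) :
    (∀ y ∈ burilloW p δ L r U aU x, ∀ z : X, p z ∈ U → dist z y ≤ r →
      z ∈ burilloW p δ L r U aU x) ∧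
    IsOpen (burilloW p δ L r U aU x) := by
  have hclosed : ∀ y ∈ burilloW p δ L r U aU x, ∀ z : X, p z ∈ U → dist z y ≤ r →
      z ∈ burilloW p δ L r U aU x := fun y hy z hzU hzy =>
    mem_burilloW_of_dist_le hlift (zero_le_one.trans hL) hδultra
      (fun a x y hx hy => (hδdist a x y hx hy).2) hUdiam haU hx hy hzU hzy
  exact ⟨hclosed, isOpen_of_forall_dist_le_mem hr (hUopen.preimage hp) (fun y hy => hy.1) hclosed⟩

theorem burilloW_claim1 {X A : Type*} [MetricSpace X] [MetricSpace A]
    (p : X → A) (hp : Continuous p)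
    (hlift : ∀ (a : A) (x : X), ∃ y, p y = a ∧ dist x y = dist (p x) a)
    (L : ℝ) (hL : 1 ≤ L) (δ : A → X → X → ℝ)
    (hδsymm : ∀ a x y, p x = a → p y = a → δ a x y = δ a y x)
    (hδzero : ∀ a x y, p x = a → p y = a → (δ a x y = 0 ↔ x = y))
    (hδultra : ∀ a x y z, p x = a → p y = a → p z = a →
      δ a x z ≤ max (δ a x y) (δ a y z))
    (hδdist : ∀ a x y, p x = a → p y = a →
      dist x y ≤ δ a x y ∧ δ a x y ≤ L * dist x y)
    (r : ℝ) (hr : 0 < r) (U : Set A) (hUopen : IsOpen U)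
    (hUdiam : ∀ a ∈ U, ∀ a' ∈ U, dist a a' ≤ r)
    (aU : A) (haU : aU ∈ U) (x : X) (hx : p x = aU) :
    (∀ y ∈ burilloW p δ L r U aU x, ∀ z : X, p z ∈ U → dist z y ≤ r →
      z ∈ burilloW p δ L r U aU x) ∧
    IsOpen (burilloW p δ L r U aU x) :=
  burilloW_claim1_general p hp hlift L hL δ hδultra hδdist r hr U hUopen hUdiam aU haU x hx
end

section
/- In the Burillo setup, fix r > 0 and an open set U ⊆ A of diameter at most r with chosen point a_U ∈ U, and let x, z ∈ p⁻¹(a_U). If W_{U,x} ∩ W_{U,z} ≠ ∅, then W_{U,x} = W_{U,z}. -/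
section

variable {X A : Type*} [MetricSpace X] {p : X → A} {δ : A → X → X → ℝ} {L r : ℝ}
  {U : Set A} {aU : A} {x z : X}

theorem burilloW_subset_of_delta_le
    (hδultra : ∀ a x y z, p x = a → p y = a → p z = a → δ a x z ≤ max (δ a x y) (δ a y z))
    (hx : p x = aU) (hz : p z = aU) (hxz : δ aU x z ≤ 3 * r * L) :
    burilloW p δ L r U aU x ⊆ burilloW p δ L r U aU z := by
  rintro y ⟨hyU, y', hy', hyy', hy'x⟩
  exact ⟨hyU, y', hy', hyy', (hδultra aU y' x z hy' hx hz).trans (max_le hy'x hxz)⟩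

theorem delta_le_of_mem_burilloW_inter
    (hδsymm : ∀ a x y, p x = a → p y = a → δ a x y = δ a y x)
    (hδultra : ∀ a x y z, p x = a → p y = a → p z = a → δ a x z ≤ max (δ a x y) (δ a y z))
    (hδle : ∀ a x y, p x = a → p y = a → δ a x y ≤ L * dist x y)
    (hL : 0 ≤ L) (hx : p x = aU) (hz : p z = aU) {w : X}
    (hw : w ∈ burilloW p δ L r U aU x ∩ burilloW p δ L r U aU z) :
    δ aU x z ≤ 3 * r * L := by
  obtain ⟨⟨-, w₁, hw₁, hww₁, hw₁x⟩, ⟨-, w₂, hw₂, hww₂, hw₂z⟩⟩ := hw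
  have hw₁w₂ : dist w₁ w₂ ≤ 2 * r := by
    linarith [dist_triangle_left w₁ w₂ w]
  have hδw₁w₂ : δ aU w₁ w₂ ≤ 3 * r * L :=
    calc δ aU w₁ w₂ ≤ L * dist w₁ w₂ := hδle aU w₁ w₂ hw₁ hw₂
      _ ≤ L * (2 * r) := by gcongr
      _ ≤ 3 * r * L := by nlinarith [dist_nonneg.trans hww₁]
  have hδw₁z : δ aU w₁ z ≤ 3 * r * L :=
    (hδultra aU w₁ w₂ z hw₁ hw₂ hz).trans (max_le hδw₁w₂ hw₂z)
  refine (hδultra aU x w₁ z hx hw₁ hz).trans (max_le ?_ hδw₁z)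
  rwa [hδsymm aU x w₁ hx hw₁]

end

theorem burilloW_claim4_general {X A : Type*} [MetricSpace X]
    (p : X → A)
    (L : ℝ) (hL : 1 ≤ L) (δ : A → X → X → ℝ)
    (hδsymm : ∀ a x y, p x = a → p y = a → δ a x y = δ a y x)
    (hδultra : ∀ a x y z, p x = a → p y = a → p z = a →
      δ a x z ≤ max (δ a x y) (δ a y z))
    (hδdist : ∀ a x y, p x = a → p y = a →
      dist x y ≤ δ a x y ∧ δ a x y ≤ L * dist x y)
    (r : ℝ) (U : Set A)
    (aU : A) (x z : X) (hx : p x = aU) (hz : p z = aU)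
    (hne : burilloW p δ L r U aU x ∩ burilloW p δ L r U aU z ≠ ∅) :
    burilloW p δ L r U aU x = burilloW p δ L r U aU z := by
  obtain ⟨w, hw⟩ := Set.nonempty_iff_ne_empty.mpr hne
  have hxz : δ aU x z ≤ 3 * r * L :=
    delta_le_of_mem_burilloW_inter hδsymm hδultra (fun a x y hx hy ↦ (hδdist a x y hx hy).2)
      (zero_le_one.trans hL) hx hz hw
  have hzx : δ aU z x ≤ 3 * r * L := hδsymm aU z x hz hx ▸ hxz
  exact (burilloW_subset_of_delta_le hδultra hx hz hxz).antisymm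
    (burilloW_subset_of_delta_le hδultra hz hx hzx)

theorem burilloW_claim4 {X A : Type*} [MetricSpace X] [MetricSpace A]
    (p : X → A) (hp : Continuous p)
    (hlift : ∀ (a : A) (x : X), ∃ y, p y = a ∧ dist x y = dist (p x) a)
    (L : ℝ) (hL : 1 ≤ L) (δ : A → X → X → ℝ)
    (hδsymm : ∀ a x y, p x = a → p y = a → δ a x y = δ a y x)
    (hδzero : ∀ a x y, p x = a → p y = a → (δ a x y = 0 ↔ x = y))
    (hδultra : ∀ a x y z, p x = a → p y = a → p z = a →
      δ a x z ≤ max (δ a x y) (δ a y z))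
    (hδdist : ∀ a x y, p x = a → p y = a →
      dist x y ≤ δ a x y ∧ δ a x y ≤ L * dist x y)
    (r : ℝ) (hr : 0 < r) (U : Set A) (hUopen : IsOpen U)
    (hUdiam : ∀ a ∈ U, ∀ a' ∈ U, dist a a' ≤ r)
    (aU : A) (haU : aU ∈ U) (x z : X) (hx : p x = aU) (hz : p z = aU)
    (hne : burilloW p δ L r U aU x ∩ burilloW p δ L r U aU z ≠ ∅) :
    burilloW p δ L r U aU x = burilloW p δ L r U aU z :=
  burilloW_claim4_general p L hL δ hδsymm hδultra hδdist r U aU x z hx hz hne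
end

section
/- In the Burillo setup, fix r > 0 and a family 𝔘 of open subsets of A, each of diameter at most r, with a chosen point a_U ∈ U for each U ∈ 𝔘. Suppose (U_0,x_0), …, (U_m,x_m) are pairs with U_i ∈ 𝔘 and x_i ∈ p⁻¹(a_{U_i}) such that the sets W_{U_0,x_0}, …, W_{U_m,x_m} are pairwise distinct and have a common point y ∈ X. Then the open sets U_0, …, U_m are pairwise distinct and all contain p(y). -/
/-!
If `W_{U,x}` and `W_{U,x'}` (same `U`, hence the same base point `a = a_U`) share a point `y`,
the fiber points witnessing this are within `2r` of each other, hence `2rL`-close for `δ_a`,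
and the ultrametric inequality gives `δ_a(x, x') ≤ 3rL`. Ultrametric closed balls of radius
`3rL` around two centres that close coincide, so `W_{U,x} = W_{U,x'}`.
-/

section BurilloW

variable {X A : Type*} [MetricSpace X] {p : X → A} {δ : A → X → X → ℝ} {L r : ℝ}

theorem burilloW_subset_of_le
    (hultra : ∀ a x y z, p x = a → p y = a → p z = a → δ a x z ≤ max (δ a x y) (δ a y z))
    {U : Set A} {a : A} {x x' : X} (hx : p x = a) (hx' : p x' = a)
    (hxx' : δ a x x' ≤ 3 * r * L) :
    burilloW p δ L r U a x ⊆ burilloW p δ L r U a x' := by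
  rintro z ⟨hzU, z', hz', hzz', hz'x⟩
  exact ⟨hzU, z', hz', hzz', (hultra a z' x x' hz' hx hx').trans (max_le hz'x hxx')⟩

theorem burilloW_eq_of_le
    (hsymm : ∀ a x y, p x = a → p y = a → δ a x y = δ a y x)
    (hultra : ∀ a x y z, p x = a → p y = a → p z = a → δ a x z ≤ max (δ a x y) (δ a y z))
    {U : Set A} {a : A} {x x' : X} (hx : p x = a) (hx' : p x' = a)
    (hxx' : δ a x x' ≤ 3 * r * L) :
    burilloW p δ L r U a x = burilloW p δ L r U a x' :=
  (burilloW_subset_of_le hultra hx hx' hxx').antisymm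
    (burilloW_subset_of_le hultra hx' hx (hsymm a x x' hx hx' ▸ hxx'))

theorem le_of_mem_burilloW_of_mem_burilloW (hr : 0 ≤ r) (hL : 0 ≤ L)
    (hsymm : ∀ a x y, p x = a → p y = a → δ a x y = δ a y x)
    (hultra : ∀ a x y z, p x = a → p y = a → p z = a → δ a x z ≤ max (δ a x y) (δ a y z))
    (hle : ∀ a x y, p x = a → p y = a → δ a x y ≤ L * dist x y)
    {U : Set A} {a : A} {x x' y : X} (hx : p x = a) (hx' : p x' = a)
    (hy : y ∈ burilloW p δ L r U a x) (hy' : y ∈ burilloW p δ L r U a x') :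
    δ a x x' ≤ 3 * r * L := by
  obtain ⟨-, z, hz, hyz, hzx⟩ := hy
  obtain ⟨-, z', hz', hyz', hz'x'⟩ := hy'
  have hzz' : δ a z z' ≤ 3 * r * L :=
    calc δ a z z' ≤ L * dist z z' := hle a z z' hz hz'
      _ ≤ L * (r + r) := by
        gcongr
        calc dist z z' ≤ dist y z + dist y z' := dist_triangle_left z z' y
          _ ≤ r + r := add_le_add hyz hyz'
      _ ≤ 3 * r * L := by nlinarith [mul_nonneg hr hL]
  calc δ a x x' ≤ max (δ a x z) (δ a z x') := hultra a x z x' hx hz hx'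
    _ ≤ max (δ a x z) (max (δ a z z') (δ a z' x')) :=
      max_le_max le_rfl (hultra a z z' x' hz hz' hx')
    _ ≤ 3 * r * L := by
      rw [hsymm a x z hx hz]
      exact max_le hzx (max_le hzz' hz'x')

end BurilloW

theorem burilloW_claim5_general {X A : Type*} [MetricSpace X]
    (p : X → A)
    (L : ℝ) (hL : 1 ≤ L) (δ : A → X → X → ℝ)
    (hδsymm : ∀ a x y, p x = a → p y = a → δ a x y = δ a y x)
    (hδultra : ∀ a x y z, p x = a → p y = a → p z = a →
      δ a x z ≤ max (δ a x y) (δ a y z))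
    (hδdist : ∀ a x y, p x = a → p y = a →
      dist x y ≤ δ a x y ∧ δ a x y ≤ L * dist x y)
    (r : ℝ) (hr : 0 < r)
    (ch : Set A → A)
    (m : ℕ) (Us : Fin (m + 1) → Set A) (xs : Fin (m + 1) → X)
    (hxs : ∀ i, p (xs i) = ch (Us i))
    (hdistinct : ∀ i j, i ≠ j →
      burilloW p δ L r (Us i) (ch (Us i)) (xs i) ≠
        burilloW p δ L r (Us j) (ch (Us j)) (xs j))
    (y : X) (hy : ∀ i, y ∈ burilloW p δ L r (Us i) (ch (Us i)) (xs i)) :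
    (∀ i j, i ≠ j → Us i ≠ Us j) ∧ (∀ i, p y ∈ Us i) := by
  refine ⟨fun i j hij hU => hdistinct i j hij ?_, fun i => (hy i).1⟩
  have hxi : p (xs i) = ch (Us j) := hU ▸ hxs i
  have hyi := hy i
  rw [hU] at hyi ⊢
  exact burilloW_eq_of_le hδsymm hδultra hxi (hxs j)
    (le_of_mem_burilloW_of_mem_burilloW hr.le (zero_le_one.trans hL) hδsymm hδultra
      (fun a x y hx hy => (hδdist a x y hx hy).2) hxi (hxs j) hyi (hy j))

theorem burilloW_claim5 {X A : Type*} [MetricSpace X] [MetricSpace A]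
    (p : X → A) (hp : Continuous p)
    (hlift : ∀ (a : A) (x : X), ∃ y, p y = a ∧ dist x y = dist (p x) a)
    (L : ℝ) (hL : 1 ≤ L) (δ : A → X → X → ℝ)
    (hδsymm : ∀ a x y, p x = a → p y = a → δ a x y = δ a y x)
    (hδzero : ∀ a x y, p x = a → p y = a → (δ a x y = 0 ↔ x = y))
    (hδultra : ∀ a x y z, p x = a → p y = a → p z = a →
      δ a x z ≤ max (δ a x y) (δ a y z))
    (hδdist : ∀ a x y, p x = a → p y = a →
      dist x y ≤ δ a x y ∧ δ a x y ≤ L * dist x y)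
    (r : ℝ) (hr : 0 < r) (𝔘 : Set (Set A))
    (hopen : ∀ U ∈ 𝔘, IsOpen U)
    (hdiam : ∀ U ∈ 𝔘, ∀ a ∈ U, ∀ a' ∈ U, dist a a' ≤ r)
    (ch : Set A → A) (hch : ∀ U ∈ 𝔘, ch U ∈ U)
    (m : ℕ) (Us : Fin (m + 1) → Set A) (xs : Fin (m + 1) → X)
    (hUs : ∀ i, Us i ∈ 𝔘) (hxs : ∀ i, p (xs i) = ch (Us i))
    (hdistinct : ∀ i j, i ≠ j →
      burilloW p δ L r (Us i) (ch (Us i)) (xs i) ≠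
        burilloW p δ L r (Us j) (ch (Us j)) (xs j))
    (y : X) (hy : ∀ i, y ∈ burilloW p δ L r (Us i) (ch (Us i)) (xs i)) :
    (∀ i j, i ≠ j → Us i ≠ Us j) ∧ (∀ i, p y ∈ Us i) :=
  burilloW_claim5_general p L hL δ hδsymm hδultra hδdist r hr ch m Us xs hxs hdistinct y hy
end

section
/- Covering construction underlying Burillo's theorem: in the Burillo setup, let n ∈ ℕ and r > 0, and suppose 𝔘 is an open covering of A such that every member of 𝔘 has diameter at most r and every point of A lies in at most n+1 members of 𝔘. Then, choosing a point a_U ∈ U for each U ∈ 𝔘, the family 𝔚 = { W_{U,x} | U ∈ 𝔘, x ∈ p⁻¹(a_U) } is an open covering of X such that every member of 𝔚 has diameter at most r(2+3L) and every point of X lies in at most n+1 pairwise distinct members of 𝔚. -/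
namespace Burillo

variable {X A : Type*} [MetricSpace X] {p : X → A} {δ : A → X → X → ℝ} {L r : ℝ}
  {U : Set A} {a : A} {x y : X}

theorem delta_le_of_mem_burilloW
    (hδultra : ∀ a x y z, p x = a → p y = a → p z = a →
      δ a x z ≤ max (δ a x y) (δ a y z))
    (hδdist : ∀ a x y, p x = a → p y = a →
      dist x y ≤ δ a x y ∧ δ a x y ≤ L * dist x y)
    (hL : 0 ≤ L) (hx : p x = a) (hy : y ∈ burilloW p δ L r U a x) {y' : X}
    (hy' : p y' = a) (hyy' : dist y y' ≤ 2 * r) :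
    δ a y' x ≤ 3 * r * L := by
  obtain ⟨-, y₁, hy₁, hyy₁, hδy₁⟩ := hy
  have hclose : dist y' y₁ ≤ 3 * r := by
    linarith [dist_triangle y' y y₁, dist_comm y y']
  have hδclose : δ a y' y₁ ≤ 3 * r * L :=
    ((hδdist a y' y₁ hy' hy₁).2.trans (mul_le_mul_of_nonneg_left hclose hL)).trans_eq
      (mul_comm _ _)
  exact (hδultra a y' y₁ x hy' hy₁ hx).trans (max_le hδclose hδy₁)

theorem burilloW_subset_of_delta_le
    (hδultra : ∀ a x y z, p x = a → p y = a → p z = a →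
      δ a x z ≤ max (δ a x y) (δ a y z))
    {x₁ x₂ : X} (hx₁ : p x₁ = a) (hx₂ : p x₂ = a) (h : δ a x₁ x₂ ≤ 3 * r * L) :
    burilloW p δ L r U a x₁ ⊆ burilloW p δ L r U a x₂ := by
  rintro z ⟨hzU, z', hz', hzz', hδz'⟩
  exact ⟨hzU, z', hz', hzz', (hδultra a z' x₁ x₂ hz' hx₁ hx₂).trans (max_le hδz' h)⟩

theorem burilloW_eq_of_delta_le
    (hδsymm : ∀ a x y, p x = a → p y = a → δ a x y = δ a y x)
    (hδultra : ∀ a x y z, p x = a → p y = a → p z = a →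
      δ a x z ≤ max (δ a x y) (δ a y z))
    {x₁ x₂ : X} (hx₁ : p x₁ = a) (hx₂ : p x₂ = a) (h : δ a x₁ x₂ ≤ 3 * r * L) :
    burilloW p δ L r U a x₁ = burilloW p δ L r U a x₂ :=
  (burilloW_subset_of_delta_le hδultra hx₁ hx₂ h).antisymm
    (burilloW_subset_of_delta_le hδultra hx₂ hx₁ (by rwa [hδsymm a x₂ x₁ hx₂ hx₁]))

theorem burilloW_eq_of_mem_of_dist_le
    (hδsymm : ∀ a x y, p x = a → p y = a → δ a x y = δ a y x)
    (hδultra : ∀ a x y z, p x = a → p y = a → p z = a →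
      δ a x z ≤ max (δ a x y) (δ a y z))
    (hδdist : ∀ a x y, p x = a → p y = a →
      dist x y ≤ δ a x y ∧ δ a x y ≤ L * dist x y)
    (hL : 0 ≤ L) (hr : 0 ≤ r) (hx : p x = a) (hy : y ∈ burilloW p δ L r U a x) {y' : X}
    (hy' : p y' = a) (hyy' : dist y y' ≤ r) :
    burilloW p δ L r U a x = burilloW p δ L r U a y' := by
  refine burilloW_eq_of_delta_le hδsymm hδultra hx hy' ?_
  rw [hδsymm a x y' hx hy']
  exact delta_le_of_mem_burilloW hδultra hδdist hL hx hy hy' (by linarith)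

theorem mem_burilloW_of_dist_le
    (hδzero : ∀ a x y, p x = a → p y = a → (δ a x y = 0 ↔ x = y))
    (hL : 0 ≤ L) (hr : 0 ≤ r) (hyU : p y ∈ U) {y' : X} (hy' : p y' = a)
    (hyy' : dist y y' ≤ r) :
    y ∈ burilloW p δ L r U a y' :=
  ⟨hyU, y', hy', hyy', by rw [(hδzero a y' y' hy' hy').2 rfl]; positivity⟩

theorem dist_le_of_mem_burilloW
    (hδsymm : ∀ a x y, p x = a → p y = a → δ a x y = δ a y x)
    (hδultra : ∀ a x y z, p x = a → p y = a → p z = a →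
      δ a x z ≤ max (δ a x y) (δ a y z))
    (hδdist : ∀ a x y, p x = a → p y = a →
      dist x y ≤ δ a x y ∧ δ a x y ≤ L * dist x y)
    (hx : p x = a) {z : X} (hy : y ∈ burilloW p δ L r U a x)
    (hz : z ∈ burilloW p δ L r U a x) :
    dist y z ≤ r * (2 + 3 * L) := by
  obtain ⟨-, y', hy', hyy', hδy'⟩ := hy
  obtain ⟨-, z', hz', hzz', hδz'⟩ := hz
  have hδx : δ a x z' ≤ 3 * r * L := by rwa [hδsymm a x z' hx hz']
  have hy'z' : dist y' z' ≤ 3 * r * L :=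
    (hδdist a y' z' hy' hz').1.trans
      ((hδultra a y' x z' hy' hx hz').trans (max_le hδy' hδx))
  calc dist y z ≤ dist y y' + dist y' z' + dist z' z := dist_triangle4 _ _ _ _
    _ ≤ r + 3 * r * L + r := by rw [dist_comm z' z]; gcongr
    _ = r * (2 + 3 * L) := by ring

theorem isOpen_burilloW [TopologicalSpace A] (hp : Continuous p) (hU : IsOpen U)
    (hnear : ∀ z, p z ∈ U → ∃ z', p z' = a ∧ dist z z' ≤ r)
    (hδultra : ∀ a x y z, p x = a → p y = a → p z = a →
      δ a x z ≤ max (δ a x y) (δ a y z))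
    (hδdist : ∀ a x y, p x = a → p y = a →
      dist x y ≤ δ a x y ∧ δ a x y ≤ L * dist x y)
    (hL : 0 ≤ L) (hr : 0 < r) (hx : p x = a) :
    IsOpen (burilloW p δ L r U a x) := by
  refine isOpen_iff_forall_mem_open.2 fun y hy => ⟨p ⁻¹' U ∩ Metric.ball y r, ?_,
    (hU.preimage hp).inter Metric.isOpen_ball, hy.1, Metric.mem_ball_self hr⟩
  rintro z ⟨hzU, hzy⟩
  obtain ⟨z', hz', hzz'⟩ := hnear z hzU
  refine ⟨hzU, z', hz', hzz', delta_le_of_mem_burilloW hδultra hδdist hL hx hy hz' ?_⟩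
  rw [Metric.mem_ball, dist_comm] at hzy
  linarith [dist_triangle y z z']

end Burillo

open Burillo in
theorem burilloW_covering {X A : Type*} [MetricSpace X] [MetricSpace A]
    (p : X → A) (hp : Continuous p)
    (hlift : ∀ (a : A) (x : X), ∃ y, p y = a ∧ dist x y = dist (p x) a)
    (L : ℝ) (hL : 1 ≤ L) (δ : A → X → X → ℝ)
    (hδsymm : ∀ a x y, p x = a → p y = a → δ a x y = δ a y x)
    (hδzero : ∀ a x y, p x = a → p y = a → (δ a x y = 0 ↔ x = y))
    (hδultra : ∀ a x y z, p x = a → p y = a → p z = a →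
      δ a x z ≤ max (δ a x y) (δ a y z))
    (hδdist : ∀ a x y, p x = a → p y = a →
      dist x y ≤ δ a x y ∧ δ a x y ≤ L * dist x y)
    (n : ℕ) (r : ℝ) (hr : 0 < r) (𝔘 : Set (Set A))
    (hcover : ⋃₀ 𝔘 = Set.univ)
    (hopen : ∀ U ∈ 𝔘, IsOpen U)
    (hdiam : ∀ U ∈ 𝔘, ∀ a ∈ U, ∀ a' ∈ U, dist a a' ≤ r)
    (horder : ∀ a : A, {U | U ∈ 𝔘 ∧ a ∈ U}.encard ≤ (n + 1 : ℕ))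
    (ch : Set A → A) (hch : ∀ U ∈ 𝔘, ch U ∈ U) :
    let 𝔚 : Set (Set X) :=
      {S | ∃ U ∈ 𝔘, ∃ x : X, p x = ch U ∧ S = burilloW p δ L r U (ch U) x}
    (∀ S ∈ 𝔚, IsOpen S) ∧
    ⋃₀ 𝔚 = Set.univ ∧
    (∀ S ∈ 𝔚, ∀ y ∈ S, ∀ z ∈ S, dist y z ≤ r * (2 + 3 * L)) ∧
    (∀ y : X, {S | S ∈ 𝔚 ∧ y ∈ S}.encard ≤ (n + 1 : ℕ)) := by
  intro 𝔚
  have hL0 : 0 ≤ L := zero_le_one.trans hL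
  choose lift hlift_fiber hlift_dist using hlift
  have hnear : ∀ U ∈ 𝔘, ∀ y, p y ∈ U → dist y (lift (ch U) y) ≤ r := fun U hU y hy =>
    (hlift_dist _ y).trans_le (hdiam U hU _ hy _ (hch U hU))
  refine ⟨?_, ?_, ?_, fun y => ?_⟩
  · rintro _ ⟨U, hU, x, hx, rfl⟩
    exact isOpen_burilloW hp (hopen U hU)
      (fun z hz => ⟨_, hlift_fiber _ z, hnear U hU z hz⟩) hδultra hδdist hL0 hr hx
  · refine Set.eq_univ_of_forall fun y => ?_
    obtain ⟨U, hU, hyU⟩ := Set.mem_sUnion.1 (hcover ▸ Set.mem_univ (p y))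
    exact ⟨_, ⟨U, hU, _, hlift_fiber _ y, rfl⟩,
      mem_burilloW_of_dist_le hδzero hL0 hr.le hyU (hlift_fiber _ y) (hnear U hU y hyU)⟩
  · rintro _ ⟨U, hU, x, hx, rfl⟩ y hy z hz
    exact dist_le_of_mem_burilloW hδsymm hδultra hδdist hx hy hz
  · calc {S | S ∈ 𝔚 ∧ y ∈ S}.encard
        ≤ ((fun U => burilloW p δ L r U (ch U) (lift (ch U) y)) ''
            {U | U ∈ 𝔘 ∧ p y ∈ U}).encard := by
          refine Set.encard_le_encard ?_
          rintro _ ⟨⟨U, hU, x, hx, rfl⟩, hy⟩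
          exact ⟨U, ⟨hU, hy.1⟩, (burilloW_eq_of_mem_of_dist_le hδsymm hδultra hδdist hL0 hr.le hx hy
            (hlift_fiber _ y) (hnear U hU y hy.1)).symm⟩
      _ ≤ {U | U ∈ 𝔘 ∧ p y ∈ U}.encard := Set.encard_image_le _ _
      _ ≤ (n + 1 : ℕ) := horder (p y)
end

section
/- In the metric space ((−1,1) × ℝ, d), where d is the tree distance, there is no isometric embedding φ : ℝ → (−1,1) × ℝ (i.e. no map with d(φ(s),φ(t)) = |s − t| for all s,t ∈ ℝ) whose image contains the segment (−1,1) × {0}. -/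
/-!
Along the segment the parameters of the isometric line are forced to be affine: if
`φ t₀ = (0, 0)` and `φ t₁ = (1/2, 0)`, then `φ (t₀ + 2x (t₁ - t₀)) = (x, 0)`. Hence the point
`φ (2 t₁ - t₀)` is at distance `1 - x` from every `(x, 0)` with `x` close to `1`. In the tree
metric the only such point is `(1, 0)`, which lies outside the strip `(-1, 1) × ℝ`.
-/

/-- The tree distance on `ℝ × ℝ`. -/
noncomputable def treeDist (p q : ℝ × ℝ) : ℝ :=
  if p.1 = q.1 then |p.2 - q.2| else |p.2| + |p.1 - q.1| + |q.2|

lemma treeDist_mk_zero_mk_zero (x y : ℝ) : treeDist (x, 0) (y, 0) = |x - y| := by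
  by_cases h : x = y <;> simp [treeDist, h]

lemma treeDist_mk_zero_of_fst_ne {p : ℝ × ℝ} {x : ℝ} (h : p.1 ≠ x) :
    treeDist p (x, 0) = |p.2| + |p.1 - x| := by
  simp [treeDist, h]

/-- A point metrically between `a` and `c` on the real line lies on the same side of `a` as `c`. -/
lemma mul_sub_eq_mul_sub_of_abs_eq_add {a b c r s : ℝ} (hab : |b - a| = r) (hac : |c - a| = s)
    (hbc : |c - b| = s - r) : r * (c - a) = s * (b - a) := by
  have hsum : |(c - b) + (b - a)| = |c - b| + |b - a| := by
    rw [sub_add_sub_cancel, hac, hbc, hab, sub_add_cancel]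
  rcases (abs_add_eq_add_abs_iff _ _).mp hsum with ⟨hcb, hba⟩ | ⟨hcb, hba⟩
  · rw [abs_of_nonneg hba] at hab
    rw [abs_of_nonneg hcb] at hbc
    subst hab
    linear_combination (b - a) * hbc
  · rw [abs_of_nonpos hba] at hab
    rw [abs_of_nonpos hcb] at hbc
    linear_combination (b - a) * hbc - (c - b) * hab

lemma eq_one_zero_of_treeDist_mk_zero_eq_one_sub {p : ℝ × ℝ} {a : ℝ} (ha : a < 1)
    (h : ∀ x ∈ Set.Ioo a 1, treeDist p (x, 0) = 1 - x) : p = (1, 0) := by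
  obtain ⟨p, q⟩ := p
  rcases lt_trichotomy p 1 with hp | rfl | hp
  · set m := max a p
    have hm : m < 1 := max_lt ha hp
    have dist_eq : ∀ x, m < x → x < 1 → |q| + (x - p) = 1 - x := fun x hmx hx1 => by
      have hpx : p < x := (le_max_right a p).trans_lt hmx
      have := h x ⟨(le_max_left a p).trans_lt hmx, hx1⟩
      rwa [treeDist_mk_zero_of_fst_ne hpx.ne, abs_sub_comm, abs_of_pos (sub_pos.mpr hpx)] at this
    have h₁ := dist_eq ((m + 1) / 2) (by linarith) (by linarith)
    have h₂ := dist_eq ((m + 3) / 4) (by linarith) (by linarith)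
    linarith
  · have hx : (a + 1) / 2 ∈ Set.Ioo a 1 := ⟨by linarith, by linarith⟩
    have := h _ hx
    rw [treeDist_mk_zero_of_fst_ne hx.2.ne', abs_of_pos (sub_pos.mpr hx.2)] at this
    simpa using this
  · have hx : (a + 1) / 2 ∈ Set.Ioo a 1 := ⟨by linarith, by linarith⟩
    have := h _ hx
    rw [treeDist_mk_zero_of_fst_ne (hx.2.trans hp).ne', abs_of_pos (sub_pos.mpr (hx.2.trans hp))]
      at this
    linarith [abs_nonneg q]

theorem no_isometric_line_through_open_segment :
    ¬∃ φ : ℝ → ℝ × ℝ,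
      (∀ t : ℝ, φ t ∈ Set.Ioo (-1 : ℝ) 1 ×ˢ (Set.univ : Set ℝ)) ∧
      (∀ s t : ℝ, treeDist (φ s) (φ t) = |s - t|) ∧
      Set.Ioo (-1 : ℝ) 1 ×ˢ ({0} : Set ℝ) ⊆ Set.range φ := by
  rintro ⟨φ, hmem, hiso, hsub⟩
  have hpreimage : ∀ x ∈ Set.Ioo (-1 : ℝ) 1, ∃ t, φ t = (x, 0) := fun x hx => hsub ⟨hx, rfl⟩
  have hdist : ∀ {s t x y}, φ s = (x, 0) → φ t = (y, 0) → |s - t| = |x - y| := fun hs ht => by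
    rw [← hiso, hs, ht, treeDist_mk_zero_mk_zero]
  obtain ⟨t₀, ht₀⟩ := hpreimage 0 ⟨by norm_num, by norm_num⟩
  obtain ⟨t₁, ht₁⟩ := hpreimage (1 / 2) ⟨by norm_num, by norm_num⟩
  have h₁₀ : |t₁ - t₀| = 1 / 2 := by rw [hdist ht₁ ht₀]; norm_num
  have hfar : ∀ x ∈ Set.Ioo (1 / 2 : ℝ) 1, treeDist (φ (2 * t₁ - t₀)) (x, 0) = 1 - x := by
    rintro x ⟨hx, hx1⟩
    obtain ⟨t, ht⟩ := hpreimage x ⟨by linarith, hx1⟩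
    have haffine : 1 / 2 * (t - t₀) = x * (t₁ - t₀) :=
      mul_sub_eq_mul_sub_of_abs_eq_add h₁₀
        (by rw [hdist ht ht₀, sub_zero, abs_of_pos (by linarith)])
        (by rw [hdist ht ht₁, abs_of_pos (by linarith)])
    rw [← ht, hiso,
      show 2 * t₁ - t₀ - t = 2 * (1 - x) * (t₁ - t₀) by linear_combination -2 * haffine,
      abs_mul, h₁₀, abs_of_pos (by linarith)]
    ring
  have hφ := eq_one_zero_of_treeDist_mk_zero_eq_one_sub (by norm_num) hfar
  exact (hmem (2 * t₁ - t₀)).1.2.ne (congrArg Prod.fst hφ)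
end
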